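/- The double-contour kernel K^{(1)}_{k,ℓ}(0) := ((−1)^{k+ℓ}/(2πi)²) ∮_{|u|=ρ} du ∮_{|v|=1/ρ} dv (u^ℓ/v^{k+1}) (1/(v−u)) φ_a(2n,u)/φ_a(2n,v), with a < ρ < 1, admits the series representation K^{(1)}_{k,ℓ}(0) = Σ_{α=0}^∞ g^{(1)}_{ℓ+α}(n) g^{(2)}_{k+α}(n). -/

import Mathlib

open Complex MeasureTheory

/-- `φ_a(2n;z) = (1+az)^n (1−a/z)^{n+1}`. -/
noncomputable def phiA (a : ℝ) (n : ℕ) (z : ℂ) : ℂ :=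
  (1 + (a : ℂ) * z) ^ n * (1 - (a : ℂ) / z) ^ (n + 1)

/-- `g^{(1)}_ℓ(n) = −(1/2πi)∮_{Γ_0} (−u)^ℓ φ_a(2n;u) du`, the contour a small circle
around `0` (radius `a/2`) not enclosing `a`. -/
noncomputable def gOne (a : ℝ) (n : ℕ) (ℓ : ℤ) : ℂ :=
  -(2 * Real.pi * Complex.I)⁻¹ * ∮ u in C(0, a / 2), (-u) ^ ℓ * phiA a n u

/-- `g^{(2)}_ℓ(n) = −(1/2πi)∮_{Γ_{0,a}} (−u)^{−ℓ−2} / φ_a(2n;u) du`, the contour a circle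
around `0` of radius `(1+a)/2` enclosing `0` and `a`. -/
noncomputable def gTwo (a : ℝ) (n : ℕ) (ℓ : ℤ) : ℂ :=
  -(2 * Real.pi * Complex.I)⁻¹ * ∮ u in C(0, (1 + a) / 2), (-u) ^ (-ℓ - 2) / phiA a n u

/-- The double-contour kernel `K^{(1)}_{k,ℓ}(0)`, with inner contour of radius `ρ` and
outer contour of radius `1/ρ`, `a < ρ < 1`. -/
noncomputable def KOneZero (a ρ : ℝ) (n : ℕ) (k ℓ : ℤ) : ℂ :=
  (-1 : ℂ) ^ (k + ℓ) / (2 * Real.pi * Complex.I) ^ 2 *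
    ∮ u in C(0, ρ), ∮ v in C(0, ρ⁻¹),
      u ^ ℓ / v ^ (k + 1) * (v - u)⁻¹ * (phiA a n u / phiA a n v)

/-!
Since `|u| = ρ < 1/ρ = |v|` on the two contours, `1/(v - u) = ∑_{α ≥ 0} u^α / v^{α+1}` converges
uniformly, with terms bounded by `ρ^{2α}`, so by dominated convergence the double integral is the
series of products `(∮ u^{ℓ+α} φ_a(2n;u) du) (∮ v^{-k-α-2} / φ_a(2n;v) dv)`. These single
integrals are `g^{(1)}_{ℓ+α}(n)` and `g^{(2)}_{k+α}(n)` up to the factors `-(-1)^m/(2πi)`, once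
their contours are moved to radii `ρ` and `1/ρ`: `(-u)^ℓ φ_a(2n;u)` is holomorphic off `0`, and
`1/φ_a(2n;u)` is holomorphic on the annulus `a < |u| < 1/a`, whose zeros `-1/a` and `a` of
`φ_a(2n;·)` lie outside.
-/

open Metric

section

variable {E : Type*} [NormedAddCommGroup E] [NormedSpace ℂ E]

theorem circleIntegral.hasSum_integral_of_dominated_convergence {F : ℕ → ℂ → E} {G : ℂ → E}
    {c : ℂ} {R : ℝ} (hR : 0 ≤ R) {bound : ℕ → ℝ} (hF : ∀ α, CircleIntegrable (F α) c R)
    (h_bound : ∀ α, ∀ z ∈ sphere c R, ‖F α z‖ ≤ bound α) (h_summable : Summable bound)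
    (h_lim : ∀ z ∈ sphere c R, HasSum (fun α => F α z) (G z)) :
    HasSum (fun α => ∮ z in C(c, R), F α z) (∮ z in C(c, R), G z) := by
  refine intervalIntegral.hasSum_integral_of_dominated_convergence (fun α _ => R * bound α)
    (fun α => (hF α).out.def'.1) (fun α => .of_forall fun θ _ => ?_)
    (.of_forall fun _ _ => h_summable.mul_left R) intervalIntegrable_const
    (.of_forall fun θ _ => (h_lim _ (circleMap_mem_sphere c hR θ)).const_smul _)
  rw [norm_smul, deriv_circleMap, norm_mul, norm_circleMap_zero, norm_I, mul_one, abs_of_nonneg hR]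
  exact mul_le_mul_of_nonneg_left (h_bound α _ (circleMap_mem_sphere c hR θ)) hR

theorem circleIntegral_eq_of_differentiableAt_annulus {f : ℂ → E} {r R : ℝ} (hr : 0 < r)
    (hrR : r ≤ R) (hf : ∀ z : ℂ, r ≤ ‖z‖ → ‖z‖ ≤ R → DifferentiableAt ℂ f z) :
    (∮ z in C(0, R), f z) = ∮ z in C(0, r), f z := by
  refine circleIntegral_eq_of_differentiable_on_annulus_off_countable hr hrR Set.countable_empty
    (fun z hz => ?_) (fun z hz => ?_)
  · simp only [Set.mem_sdiff, mem_closedBall, mem_ball, dist_zero_right, not_lt] at hz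
    exact (hf z hz.2 hz.1).continuousAt.continuousWithinAt
  · simp only [Set.sdiff_empty, Set.mem_sdiff, mem_closedBall, mem_ball, dist_zero_right,
      not_le] at hz
    exact hf z hz.2.le hz.1.le

end

theorem hasSum_pow_mul_circleIntegral_div_pow {g : ℂ → ℂ} {R : ℝ} (hg : CircleIntegrable g 0 R)
    {u : ℂ} (hu : ‖u‖ < R) :
    HasSum (fun α : ℕ => u ^ α * ∮ v in C(0, R), g v / v ^ (α + 1))
      (∮ v in C(0, R), (v - u)⁻¹ * g v) := by
  have hterm : ∀ α : ℕ, (∮ v in C(0, R), (u / v) ^ α * (v⁻¹ * g v))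
      = u ^ α * ∮ v in C(0, R), g v / v ^ (α + 1) := fun α => by
    rw [← circleIntegral.integral_const_mul]
    congr 1; ext v; ring
  simpa only [hterm, sub_zero, zero_add, smul_eq_mul]
    using hasSum_two_pi_I_cauchyPowerSeries_integral hg hu

theorem hasSum_circleIntegral_circleIntegral_mul_inv_sub {f g : ℂ → ℂ} {r R : ℝ} (hr : 0 ≤ r)
    (hrR : r < R) (hf : ContinuousOn f (sphere 0 r)) (hg : ContinuousOn g (sphere 0 R)) :
    HasSum (fun α : ℕ => (∮ u in C(0, r), u ^ α * f u) * ∮ v in C(0, R), g v / v ^ (α + 1))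
      (∮ u in C(0, r), ∮ v in C(0, R), f u * g v * (v - u)⁻¹) := by
  have hR : 0 < R := hr.trans_lt hrR
  set c : ℕ → ℂ := fun α => ∮ v in C(0, R), g v / v ^ (α + 1)
  obtain ⟨Mf, hMf⟩ := (isCompact_sphere (0 : ℂ) r).exists_bound_of_continuousOn hf
  obtain ⟨Mg, hMg⟩ := (isCompact_sphere (0 : ℂ) R).exists_bound_of_continuousOn hg
  have hc : ∀ α : ℕ, ‖c α‖ ≤ 2 * Real.pi * R * (Mg / R ^ (α + 1)) := fun α =>
    circleIntegral.norm_integral_le_of_norm_le_const hR.le fun v hv => by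
      rw [norm_div, norm_pow, mem_sphere_zero_iff_norm.1 hv]
      gcongr
      exact hMg v hv
  have hbound : ∀ α : ℕ, ∀ u ∈ sphere (0 : ℂ) r,
      ‖u ^ α * f u * c α‖ ≤ 2 * Real.pi * Mf * Mg * (r / R) ^ α := fun α u hu => by
    have hMf0 : 0 ≤ Mf := (norm_nonneg _).trans (hMf u hu)
    calc ‖u ^ α * f u * c α‖ ≤ r ^ α * Mf * (2 * Real.pi * R * (Mg / R ^ (α + 1))) := by
          rw [norm_mul, norm_mul, norm_pow, mem_sphere_zero_iff_norm.1 hu]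
          gcongr
          · exact hMf u hu
          · exact hc α
      _ = 2 * Real.pi * Mf * Mg * (r / R) ^ α := by
          rw [div_pow, pow_succ]
          field_simp
  have hterm : ∀ α : ℕ,
      (∮ u in C(0, r), u ^ α * f u * c α) = (∮ u in C(0, r), u ^ α * f u) * c α :=
    fun α => circleIntegral.integral_smul_const (fun u => u ^ α * f u) (c α) 0 r
  have hsum := circleIntegral.hasSum_integral_of_dominated_convergence hr
    (F := fun α u => u ^ α * f u * c α)
    (fun α => ((continuousOn_pow α).mul hf).mul continuousOn_const |>.circleIntegrable hr)
    hbound ((summable_geometric_of_lt_one (div_nonneg hr hR.le) ((div_lt_one hR).2 hrR)).mul_left _)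
    (G := fun u => ∮ v in C(0, R), f u * g v * (v - u)⁻¹) fun u hu => by
      have hu' : ‖u‖ < R := (mem_sphere_zero_iff_norm.1 hu).trans_lt hrR
      have hexpand : (∮ v in C(0, R), f u * g v * (v - u)⁻¹)
          = f u * ∮ v in C(0, R), (v - u)⁻¹ * g v := by
        rw [← circleIntegral.integral_const_mul]; congr 1; ext v; ring
      rw [hexpand, show (fun α => u ^ α * f u * c α) = fun α => f u * (u ^ α * c α) by ext; ring]
      exact (hasSum_pow_mul_circleIntegral_div_pow (hg.circleIntegrable hR.le) hu').mul_left (f u)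
  simpa only [hterm] using hsum

theorem differentiableAt_phiA (a : ℝ) (n : ℕ) {z : ℂ} (hz : z ≠ 0) :
    DifferentiableAt ℂ (phiA a n) z := by
  unfold phiA
  fun_prop (disch := assumption)

theorem phiA_ne_zero {a : ℝ} (n : ℕ) (ha : 0 < a) {z : ℂ} (haz : a < ‖z‖) (hza : ‖z‖ < a⁻¹) :
    phiA a n z ≠ 0 := by
  have hz : z ≠ 0 := norm_pos_iff.1 (ha.trans haz)
  refine mul_ne_zero (pow_ne_zero _ fun h => ?_) (pow_ne_zero _ fun h => ?_)
  · have hnorm : a * ‖z‖ = 1 := by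
      simpa [abs_of_pos ha] using congr_arg norm (eq_neg_of_add_eq_zero_right h)
    have hlt := mul_lt_mul_of_pos_left hza ha
    rw [mul_inv_cancel₀ ha.ne'] at hlt
    linarith
  · rw [sub_eq_zero, eq_div_iff hz, one_mul] at h
    rw [h, norm_real, Real.norm_of_nonneg ha.le] at haz
    exact haz.false

theorem gOne_eq_circleIntegral {a ρ : ℝ} (n : ℕ) (ha : 0 < a) (haρ : a < ρ) (m : ℤ) :
    gOne a n m = -(2 * Real.pi * I)⁻¹ * (-1) ^ m * ∮ u in C(0, ρ), u ^ m * phiA a n u := by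
  have hneg : ∀ u : ℂ, (-u) ^ m * phiA a n u = (-1) ^ m * (u ^ m * phiA a n u) := fun u => by
    rw [neg_eq_neg_one_mul, mul_zpow, mul_assoc]
  have hdiff : ∀ z : ℂ, a / 2 ≤ ‖z‖ → ‖z‖ ≤ ρ →
      DifferentiableAt ℂ (fun u => (-u) ^ m * phiA a n u) z := fun z hz _ => by
    have hz0 : z ≠ 0 := norm_pos_iff.1 (lt_of_lt_of_le (by positivity) hz)
    exact (differentiableAt_id.neg.zpow (Or.inl (neg_ne_zero.2 hz0))).mul
      (differentiableAt_phiA a n hz0)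
  rw [gOne, ← circleIntegral_eq_of_differentiableAt_annulus (by positivity) (by linarith) hdiff]
  simp_rw [hneg, circleIntegral.integral_const_mul, mul_assoc]

theorem neg_one_zpow_neg_sub_two {K : Type*} [DivisionRing K] (m : ℤ) :
    (-1 : K) ^ (-m - 2) = (-1) ^ m := by
  rw [show -m - 2 = m + 2 * (-m - 1) by ring, zpow_add₀ (by norm_num),
    (even_two_mul _).neg_one_zpow, mul_one]

theorem gTwo_eq_circleIntegral {a ρ : ℝ} (n : ℕ) (ha : 0 < a) (haρ : a < ρ) (hρ : ρ < 1)
    (m : ℤ) :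
    gTwo a n m = -(2 * Real.pi * I)⁻¹ * (-1) ^ m * ∮ v in C(0, ρ⁻¹), v ^ (-m - 2) / phiA a n v := by
  have hρ0 : 0 < ρ := ha.trans haρ
  have h1ρ : 1 < ρ⁻¹ := (one_lt_inv₀ hρ0).2 hρ
  have hρa : ρ⁻¹ < a⁻¹ := (inv_lt_inv₀ hρ0 ha).2 haρ
  have hneg : ∀ v : ℂ, (-v) ^ (-m - 2) / phiA a n v = (-1) ^ m * (v ^ (-m - 2) / phiA a n v) :=
    fun v => by rw [neg_eq_neg_one_mul, mul_zpow, neg_one_zpow_neg_sub_two, mul_div_assoc]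
  have hdiff : ∀ z : ℂ, (1 + a) / 2 ≤ ‖z‖ → ‖z‖ ≤ ρ⁻¹ →
      DifferentiableAt ℂ (fun v => (-v) ^ (-m - 2) / phiA a n v) z := fun z hz hz' => by
    have haz : a < ‖z‖ := by linarith
    have hz0 : z ≠ 0 := norm_pos_iff.1 (ha.trans haz)
    exact (differentiableAt_id.neg.zpow (Or.inl (neg_ne_zero.2 hz0))).div
      (differentiableAt_phiA a n hz0) (phiA_ne_zero n ha haz (by linarith))
  rw [gTwo, ← circleIntegral_eq_of_differentiableAt_annulus (by linarith) (by linarith) hdiff]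
  simp_rw [hneg, circleIntegral.integral_const_mul, mul_assoc]

theorem hasSum_circleIntegral_mul_circleIntegral_phiA {a ρ : ℝ} (n : ℕ) (ha : 0 < a)
    (haρ : a < ρ) (hρ1 : ρ < 1) (k ℓ : ℤ) :
    HasSum (fun α : ℕ => (∮ u in C(0, ρ), u ^ (ℓ + α) * phiA a n u) *
        ∮ v in C(0, ρ⁻¹), v ^ (-(k + α) - 2) / phiA a n v)
      (∮ u in C(0, ρ), ∮ v in C(0, ρ⁻¹),
        u ^ ℓ / v ^ (k + 1) * (v - u)⁻¹ * (phiA a n u / phiA a n v)) := by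
  have hρ : 0 < ρ := ha.trans haρ
  have hρ' : 1 < ρ⁻¹ := (one_lt_inv₀ hρ).2 hρ1
  have hφ : ∀ v ∈ sphere (0 : ℂ) ρ⁻¹, v ≠ 0 ∧ phiA a n v ≠ 0 := fun v hv => by
    rw [mem_sphere_zero_iff_norm] at hv
    exact ⟨norm_ne_zero_iff.1 (by linarith), phiA_ne_zero n ha (by linarith)
      (hv ▸ (inv_lt_inv₀ hρ ha).2 haρ)⟩
  have hf : ContinuousOn (fun u => u ^ ℓ * phiA a n u) (sphere 0 ρ) := fun u hu => by
    have hu0 : u ≠ 0 := ne_zero_of_mem_sphere hρ.ne' ⟨u, hu⟩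
    exact ((continuousAt_zpow₀ u ℓ (.inl hu0)).mul
      (differentiableAt_phiA a n hu0).continuousAt).continuousWithinAt
  have hg : ContinuousOn (fun v => (v ^ (k + 1))⁻¹ / phiA a n v) (sphere 0 ρ⁻¹) := fun v hv =>
    ((continuousAt_zpow₀ v _ (.inl (hφ v hv).1)).inv₀ (zpow_ne_zero _ (hφ v hv).1)
      |>.div (differentiableAt_phiA a n (hφ v hv).1).continuousAt (hφ v hv).2).continuousWithinAt
  convert hasSum_circleIntegral_circleIntegral_mul_inv_sub hρ.le (hρ1.trans hρ') hf hg using 1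
  · ext α
    congr 1
    · refine circleIntegral.integral_congr hρ.le fun u hu => ?_
      rw [zpow_add₀ (ne_zero_of_mem_sphere hρ.ne' ⟨u, hu⟩), zpow_natCast]
      ring
    · refine circleIntegral.integral_congr (by positivity) fun v hv => ?_
      rw [show -(k + α) - 2 = -(k + 1) - ((α + 1 : ℕ) : ℤ) by push_cast; ring,
        zpow_sub₀ (hφ v hv).1, zpow_neg, zpow_natCast]
      ring
  · congr 1; ext u; congr 1; ext v; ring

theorem gOne_mul_gTwo {a ρ : ℝ} (n : ℕ) (ha : 0 < a) (haρ : a < ρ) (hρ1 : ρ < 1) (k ℓ : ℤ)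
    (α : ℕ) :
    gOne a n (ℓ + α) * gTwo a n (k + α) = (-1) ^ (k + ℓ) / (2 * Real.pi * I) ^ 2 *
      ((∮ u in C(0, ρ), u ^ (ℓ + α) * phiA a n u) *
        ∮ v in C(0, ρ⁻¹), v ^ (-(k + α) - 2) / phiA a n v) := by
  have hsign : (-1 : ℂ) ^ (ℓ + α) * (-1) ^ (k + α) = (-1) ^ (k + ℓ) := by
    rw [← zpow_add₀ (by norm_num), show ℓ + α + (k + α) = k + ℓ + 2 * α by ring,
      zpow_add₀ (by norm_num), (even_two_mul _).neg_one_zpow, mul_one]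
  rw [gOne_eq_circleIntegral n ha haρ, gTwo_eq_circleIntegral n ha haρ hρ1]
  linear_combination ((2 * Real.pi * I)⁻¹ ^ 2 * (∮ u in C(0, ρ), u ^ (ℓ + α) * phiA a n u) *
    ∮ v in C(0, ρ⁻¹), v ^ (-(k + α) - 2) / phiA a n v) * hsign

/-- The double-contour kernel `K^{(1)}_{k,ℓ}(0)` admits the series representation
`K^{(1)}_{k,ℓ}(0) = Σ_{α≥0} g^{(1)}_{ℓ+α}(n) g^{(2)}_{k+α}(n)`. -/
theorem KOneZero_eq_tsum (a ρ : ℝ) (ha0 : 0 < a) (haρ : a < ρ) (hρ1 : ρ < 1)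
    (n : ℕ) (k ℓ : ℤ) :
    KOneZero a ρ n k ℓ = ∑' α : ℕ, gOne a n (ℓ + (α : ℤ)) * gTwo a n (k + (α : ℤ)) := by
  rw [KOneZero, ← (hasSum_circleIntegral_mul_circleIntegral_phiA n ha0 haρ hρ1 k ℓ).tsum_eq,
    ← tsum_mul_left]
  exact tsum_congr fun α => (gOne_mul_gTwo n ha0 haρ hρ1 k ℓ α).symm
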